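/- With T^0_m and U^0_m defined by T^0_1 = a, U^0_1 = -1, T^0_2 = 1, U^0_2 = a - 2, T^0_{2k+1} = a(U^0_{2k})^2, U^0_{2k+1} = T^0_{2k}(T^0_{2k} + 2U^0_{2k}), T^0_{2k+2} = (T^0_{2k})^2(T^0_{2k} + 2U^0_{2k})^2, U^0_{2k+2} = (U^0_{2k})^2(a(U^0_{2k})^2 + 2(T^0_{2k})^2 + 4T^0_{2k}U^0_{2k}), we have deg(T^0_m + U^0_m) = (2^m - (-1)^m)/3 for all m ≥ 1. -/
import Mathlib


open Polynomial

/-- `TUeven k = (T⁰_{2k+2}, U⁰_{2k+2})`, polynomials in `a = X`. -/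
noncomputable def TUeven : ℕ → Polynomial ℤ × Polynomial ℤ
  | 0 => (1, X - 2)
  | (k + 1) =>
      ((TUeven k).1 ^ 2 * ((TUeven k).1 + 2 * (TUeven k).2) ^ 2,
       (TUeven k).2 ^ 2 *
         (X * (TUeven k).2 ^ 2 + 2 * (TUeven k).1 ^ 2 + 4 * (TUeven k).1 * (TUeven k).2))

/-- `TU m = (T⁰_m, U⁰_m)` for `m ≥ 1`:  `T⁰_1 = a`, `U⁰_1 = -1`, `T⁰_2 = 1`,
`U⁰_2 = a - 2`, `T⁰_{2k+1} = a·(U⁰_{2k})²`, `U⁰_{2k+1} = T⁰_{2k}(T⁰_{2k} + 2U⁰_{2k})`,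
`T⁰_{2k+2} = (T⁰_{2k})²(T⁰_{2k} + 2U⁰_{2k})²`,
`U⁰_{2k+2} = (U⁰_{2k})²(a(U⁰_{2k})² + 2(T⁰_{2k})² + 4T⁰_{2k}U⁰_{2k})`. -/
noncomputable def TU (m : ℕ) : Polynomial ℤ × Polynomial ℤ :=
  if m = 0 then (0, 0)
  else if m = 1 then (X, -1)
  else if m % 2 = 0 then TUeven (m / 2 - 1)
  else ((X : Polynomial ℤ) * (TUeven (m / 2 - 1)).2 ^ 2,
        (TUeven (m / 2 - 1)).1 * ((TUeven (m / 2 - 1)).1 + 2 * (TUeven (m / 2 - 1)).2))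

/-- degree of `U⁰_{2k+2}` -/
def dd : ℕ → ℕ
  | 0 => 1
  | (k + 1) => 4 * dd k + 1

/-- degree of `T⁰_{2k+2}` -/
def ee : ℕ → ℕ
  | 0 => 0
  | (k + 1) => 2 * ee k + 2 * dd k

lemma ee_lt_dd : ∀ k, ee k < dd k
  | 0 => by simp [ee, dd]
  | (k + 1) => by
      have := ee_lt_dd k
      simp only [ee, dd]
      omega

lemma TUeven_spec (k : ℕ) :
    ((TUeven k).2).Monic ∧ (TUeven k).2.natDegree = dd k ∧
      (TUeven k).1 ≠ 0 ∧ (TUeven k).1.natDegree = ee k := by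
  induction k with
  | zero =>
      refine ⟨?_, ?_, ?_, ?_⟩
      · simpa [TUeven] using (monic_X_sub_C (2 : ℤ))
      · simpa [TUeven, dd] using natDegree_X_sub_C (2 : ℤ)
      · simp [TUeven]
      · simp [TUeven, ee]
  | succ k ih =>
      obtain ⟨hQmon, hQdeg, hPne, hPdeg⟩ := ih
      set P := (TUeven k).1 with hP
      set Q := (TUeven k).2 with hQ
      have hQne : Q ≠ 0 := hQmon.ne_zero
      have h2Q : ((2 : Polynomial ℤ) * Q).natDegree = dd k := by
        rw [natDegree_mul (by norm_num) hQne]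
        simpa using hQdeg
      have h2Qne : (2 : Polynomial ℤ) * Q ≠ 0 := mul_ne_zero (by norm_num) hQne
      have hsum : (P + 2 * Q).natDegree = dd k := by
        rw [natDegree_add_eq_right_of_natDegree_lt (by rw [h2Q, hPdeg]; exact ee_lt_dd k), h2Q]
      have hsumne : P + 2 * Q ≠ 0 := by
        intro h
        have h1 : 1 ≤ dd k := by
          induction k with
          | zero => simp [dd]
          | succ n _ => simp only [dd]; omega
        rw [h, natDegree_zero] at hsum
        omega
      have hXQ2mon : (X * Q ^ 2).Monic := monic_X.mul (hQmon.pow 2)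
      have hXQ2deg : (X * Q ^ 2).natDegree = 2 * dd k + 1 := by
        rw [natDegree_mul X_ne_zero (pow_ne_zero 2 hQne), natDegree_X, natDegree_pow, hQdeg]
        ring
      have hrw : X * Q ^ 2 + 2 * P ^ 2 + 4 * P * Q = X * Q ^ 2 + 2 * P * (P + 2 * Q) := by
        ring
      have hrdeg : ((2 : Polynomial ℤ) * P * (P + 2 * Q)).natDegree = ee k + dd k := by
        rw [natDegree_mul (mul_ne_zero (by norm_num) hPne) hsumne,
          natDegree_mul (by norm_num : (2 : Polynomial ℤ) ≠ 0) hPne, hsum, hPdeg]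
        simp
      have hrlt : ((2 : Polynomial ℤ) * P * (P + 2 * Q)).natDegree < (X * Q ^ 2).natDegree := by
        rw [hrdeg, hXQ2deg]
        have := ee_lt_dd k
        omega
      have hRmon : (X * Q ^ 2 + 2 * P ^ 2 + 4 * P * Q).Monic := by
        rw [hrw]
        exact hXQ2mon.add_of_left (degree_lt_degree hrlt)
      have hRdeg : (X * Q ^ 2 + 2 * P ^ 2 + 4 * P * Q).natDegree = 2 * dd k + 1 := by
        rw [hrw, natDegree_add_eq_left_of_natDegree_lt hrlt, hXQ2deg]
      refine ⟨?_, ?_, ?_, ?_⟩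
      · show ((TUeven k).2 ^ 2 * _).Monic
        exact (hQmon.pow 2).mul hRmon
      · show ((TUeven k).2 ^ 2 * _).natDegree = dd (k + 1)
        rw [natDegree_mul (pow_ne_zero 2 hQne) hRmon.ne_zero, natDegree_pow, hQdeg, hRdeg]
        simp only [dd]; ring
      · show (TUeven k).1 ^ 2 * _ ≠ 0
        exact mul_ne_zero (pow_ne_zero 2 hPne) (pow_ne_zero 2 hsumne)
      · show ((TUeven k).1 ^ 2 * _).natDegree = ee (k + 1)
        rw [natDegree_mul (pow_ne_zero 2 hPne) (pow_ne_zero 2 hsumne), natDegree_pow,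
          natDegree_pow, hPdeg, hsum]
        simp only [ee]

lemma dd_q (k : ℕ) : ((dd k : ℚ)) = ((2 : ℚ) ^ (2 * k + 2) - 1) / 3 := by
  induction k with
  | zero => norm_num [dd]
  | succ k ih =>
      have : (dd (k + 1) : ℚ) = 4 * (dd k : ℚ) + 1 := by
        simp only [dd]; push_cast; ring
      rw [this, ih]
      rw [show 2 * (k + 1) + 2 = (2 * k + 2) + 2 by ring, pow_add]
      ring

theorem degree_T_add_U (m : ℕ) (hm : 1 ≤ m) :
    ((((TU m).1 + (TU m).2).natDegree : ℚ) = ((2 : ℚ) ^ m - (-1) ^ m) / 3) := by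
  rcases Nat.even_or_odd m with ⟨k, hk⟩ | ⟨k, hk⟩
  · -- m = 2k, k ≥ 1, write k = j+1
    obtain ⟨j, rfl⟩ : ∃ j, k = j + 1 := ⟨k - 1, by omega⟩
    subst hk
    obtain ⟨hQmon, hQdeg, hPne, hPdeg⟩ := TUeven_spec j
    have hm2 : (j + 1 + (j + 1)) = 2 * j + 2 := by ring
    rw [hm2]
    have hTU : TU (2 * j + 2) = TUeven j := by
      have h0 : 2 * j + 2 ≠ 0 := by omega
      have h1 : 2 * j + 2 ≠ 1 := by omega
      have h2 : (2 * j + 2) % 2 = 0 := by omega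
      have h3 : (2 * j + 2) / 2 - 1 = j := by omega
      simp [TU, h0, h1, h2, h3]
    rw [hTU]
    have hdeg : ((TUeven j).1 + (TUeven j).2).natDegree = dd j := by
      rw [natDegree_add_eq_right_of_natDegree_lt (by rw [hQdeg, hPdeg]; exact ee_lt_dd j), hQdeg]
    rw [hdeg, dd_q]
    rw [show (-1 : ℚ) ^ (2 * j + 2) = 1 by
      rw [show 2 * j + 2 = 2 * (j + 1) by ring, pow_mul]; norm_num]
  · -- m = 2k + 1
    subst hk
    rcases Nat.eq_zero_or_pos k with rfl | hk1
    · -- m = 1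
      have h : TU 1 = ((X : Polynomial ℤ), -1) := by simp [TU]
      rw [show 2 * 0 + 1 = 1 by ring, h]
      have : ((X : Polynomial ℤ) + (-1)) = X - C 1 := by rw [map_one]; ring
      rw [this, natDegree_X_sub_C]
      norm_num
    · obtain ⟨j, rfl⟩ : ∃ j, k = j + 1 := ⟨k - 1, by omega⟩
      obtain ⟨hQmon, hQdeg, hPne, hPdeg⟩ := TUeven_spec j
      set P := (TUeven j).1 with hP
      set Q := (TUeven j).2 with hQ
      have hQne : Q ≠ 0 := hQmon.ne_zero
      have hm' : 2 * (j + 1) + 1 = 2 * j + 3 := by ring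
      rw [hm']
      have hTU : TU (2 * j + 3) = ((X : Polynomial ℤ) * Q ^ 2, P * (P + 2 * Q)) := by
        have h0 : 2 * j + 3 ≠ 0 := by omega
        have h1 : 2 * j + 3 ≠ 1 := by omega
        have h2 : ¬((2 * j + 3) % 2 = 0) := by omega
        have h3 : (2 * j + 3) / 2 - 1 = j := by omega
        simp [TU, h0, h1, h2, h3, hP, hQ]
      rw [hTU]
      have h2Q : ((2 : Polynomial ℤ) * Q).natDegree = dd j := by
        rw [natDegree_mul (by norm_num) hQne]
        simpa using hQdeg
      have hsum : (P + 2 * Q).natDegree = dd j := by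
        rw [natDegree_add_eq_right_of_natDegree_lt (by rw [h2Q, hPdeg]; exact ee_lt_dd j), h2Q]
      have hsumne : P + 2 * Q ≠ 0 := by
        intro h
        have h1 : 1 ≤ dd j := by
          induction j with
          | zero => simp [dd]
          | succ n _ => simp only [dd]; omega
        rw [h, natDegree_zero] at hsum
        omega
      have hXQ2deg : ((X : Polynomial ℤ) * Q ^ 2).natDegree = 2 * dd j + 1 := by
        rw [natDegree_mul X_ne_zero (pow_ne_zero 2 hQne), natDegree_X, natDegree_pow, hQdeg]
        ring
      have hUdeg : (P * (P + 2 * Q)).natDegree = ee j + dd j := by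
        rw [natDegree_mul hPne hsumne, hPdeg, hsum]
      have hdeg : ((X : Polynomial ℤ) * Q ^ 2 + P * (P + 2 * Q)).natDegree = 2 * dd j + 1 := by
        rw [natDegree_add_eq_left_of_natDegree_lt
          (by rw [hUdeg, hXQ2deg]; have := ee_lt_dd j; omega), hXQ2deg]
      rw [hdeg]
      have hneg : (-1 : ℚ) ^ (2 * j + 3) = -1 := by
        rw [show 2 * j + 3 = 2 * (j + 1) + 1 by ring, pow_succ, pow_mul]; norm_num
      push_cast
      rw [dd_q, hneg, show (2 : ℚ) ^ (2 * j + 3) = 2 ^ (2 * j + 2) * 2 by rw [pow_succ]]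
      ring
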